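/- arXiv:1510.08724 — 2 statements merged into one kernel-verified Lean document; each statement's English description precedes it below -/
import Mathlib

section
/- Let X be a topological space and let ΣX denote its (unreduced) suspension, the quotient of X × [0,1] obtained by collapsing X × {0} to one point and X × {1} to another point, equipped with the Z/2-action induced by (x,t) ↦ (x, 1−t), which interchanges the two cones. Then the effective topological complexity satisfies TC^{Z/2,∞}(ΣX) = 1; that is, for some k ≥ 1 there exists a (Z/2,k)-motion planner defined on all of ΣX × ΣX. -/
open Set

/-- The space of `k`-tuples of paths in `X` that are consecutive up to the `G`-action:
the `(i+1)`-st path starts in the `G`-orbit of the endpoint of the `i`-th path. -/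
def effPk (G X : Type*) [Group G] [TopologicalSpace X] [MulAction G X] (k : ℕ) :
    Set (Fin k → C(unitInterval, X)) :=
  {γ | ∀ (i : ℕ) (h : i + 1 < k),
    γ ⟨i + 1, h⟩ 0 ∈ MulAction.orbit G (γ ⟨i, Nat.lt_of_succ_lt h⟩ 1)}

/-- A `(G,k)`-motion planner on `U ⊆ X × X`: a continuous section over `U` of the map
`π_k` sending a `k`-tuple of consecutive-up-to-`G` paths to its (start, end) pair. -/
def IsEffPlanner (G X : Type*) [Group G] [TopologicalSpace X] [MulAction G X]
    (k : ℕ) (hk : 0 < k) (U : Set (X × X)) : Prop :=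
  ∃ s : U → (Fin k → C(unitInterval, X)),
    Continuous s ∧ (∀ u, s u ∈ effPk G X k) ∧
    ∀ u : U, (s u ⟨0, hk⟩) 0 = (u : X × X).1 ∧
      (s u ⟨k - 1, Nat.sub_lt hk Nat.one_pos⟩) 1 = (u : X × X).2

/-- `TC^{G,k}(X)`: the least `ℓ ≥ 1` such that `X × X` admits an open cover by `ℓ` sets,
each admitting a `(G,k)`-motion planner; `∞` if there is no such `ℓ`. -/
noncomputable def effTC (G X : Type*) [Group G] [TopologicalSpace X] [MulAction G X]
    (k : ℕ) (hk : 0 < k) : ℕ∞ :=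
  sInf {ℓ : ℕ∞ | ∃ n : ℕ, ℓ = n ∧ 1 ≤ n ∧
    ∃ U : Fin n → Set (X × X), (∀ i, IsOpen (U i)) ∧ (⋃ i, U i) = Set.univ ∧
      ∀ i, IsEffPlanner G X k hk (U i)}

/-- Effective topological complexity `TC^{G,∞}(X)`: the minimum of `TC^{G,k}(X)` over `k ≥ 1`. -/
noncomputable def effTCinf (G X : Type*) [Group G] [TopologicalSpace X] [MulAction G X] : ℕ∞ :=
  ⨅ k : ℕ, effTC G X (k + 1) k.succ_pos

/-- Farber's (non-reduced) topological complexity `TC(X)`. -/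
noncomputable def farberTC (X : Type*) [TopologicalSpace X] : ℕ∞ :=
  sInf {ℓ : ℕ∞ | ∃ n : ℕ, ℓ = n ∧ 1 ≤ n ∧
    ∃ U : Fin n → Set (X × X), (∀ i, IsOpen (U i)) ∧ (⋃ i, U i) = Set.univ ∧
      ∀ i, ∃ s : (U i) → C(unitInterval, X), Continuous s ∧
        ∀ u : (U i), (s u) 0 = (u : X × X).1 ∧ (s u) 1 = (u : X × X).2}

/-- The action of `ℤ/2` on `X` generated by an involution `f`. -/
def involutionAction {X : Type*} (f : X → X) (hf : ∀ x, f (f x) = x) :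
    MulAction (Multiplicative (ZMod 2)) X where
  smul g x := if g.toAdd = 1 then f x else x
  one_smul x := by
    show (if (Multiplicative.toAdd (1 : Multiplicative (ZMod 2))) = 1 then f x else x) = x
    simp
  mul_smul a b x := by
    have hcases : ∀ z : ZMod 2, z = 0 ∨ z = 1 := by decide
    show (if (Multiplicative.toAdd (a * b)) = 1 then f x else x) =
      (if a.toAdd = 1 then f (if b.toAdd = 1 then f x else x) else (if b.toAdd = 1 then f x else x))
    rcases hcases a.toAdd with ha | ha <;> rcases hcases b.toAdd with hb | hb <;>
      simp [toAdd_mul, ha, hb, hf x]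

/-- The identification relation of the unreduced suspension: collapse `X × {0}` to one point
and `X × {1}` to another. -/
def suspRel (X : Type*) (p q : X × unitInterval) : Prop :=
  p = q ∨ (p.2 = 0 ∧ q.2 = 0) ∨ (p.2 = 1 ∧ q.2 = 1)

/-- The unreduced suspension `ΣX`, with the quotient topology. -/
def Susp (X : Type*) [TopologicalSpace X] : Type _ := Quot (suspRel X)

instance (X : Type*) [TopologicalSpace X] : TopologicalSpace (Susp X) :=
  instTopologicalSpaceQuot

/-- The involution of `ΣX` induced by `(x, t) ↦ (x, 1 - t)`, interchanging the two cones. -/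
def suspFlip (X : Type*) [TopologicalSpace X] : Susp X → Susp X :=
  Quot.map (fun p => (p.1, unitInterval.symm p.2)) (by
    rintro p q (rfl | ⟨h0, h0'⟩ | ⟨h1, h1'⟩)
    · exact Or.inl rfl
    · exact Or.inr (Or.inr (by simp [h0, h0']))
    · exact Or.inr (Or.inl (by simp [h1, h1'])))

lemma suspFlip_invol (X : Type*) [TopologicalSpace X] (y : Susp X) :
    suspFlip X (suspFlip X y) = y := by
  induction y using Quot.ind with
  | mk p =>
    obtain ⟨x, t⟩ := p
    show Quot.mk _ (x, unitInterval.symm (unitInterval.symm t)) = Quot.mk _ (x, t)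
    rw [unitInterval.symm_symm]

/-!
Folding `ΣX` onto its upper cone, `[x, t] ↦ [x, max t (1 - t)]`, moves every point within its
`ℤ/2`-orbit, and the folded map is null-homotopic since the upper cone contracts to the north
pole. Any such map yields a global `(G, 3)`-motion planner: stay at `a`, jump to `r a` in its
orbit, follow the null-homotopy of `r` out to its constant value and back to `r b`, then jump
to `b`.
-/

open unitInterval ContinuousMap

section EffectiveTC

variable {G X : Type*} [Group G] [TopologicalSpace X] [MulAction G X]

theorem one_le_effTC (k : ℕ) (hk : 0 < k) : 1 ≤ effTC G X k hk :=
  le_sInf <| by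
    rintro ℓ ⟨n, rfl, hn, -⟩
    exact_mod_cast hn

theorem effTC_eq_one_of_isEffPlanner_univ {k : ℕ} {hk : 0 < k}
    (h : IsEffPlanner G X k hk univ) : effTC G X k hk = 1 :=
  le_antisymm (sInf_le ⟨1, by norm_num, le_rfl, fun _ => univ, fun _ => isOpen_univ,
    iUnion_const _, fun _ => h⟩) (one_le_effTC k hk)

theorem effTCinf_eq_one_of_isEffPlanner_univ {k : ℕ}
    (h : IsEffPlanner G X (k + 1) k.succ_pos univ) : effTCinf G X = 1 :=
  le_antisymm ((iInf_le _ k).trans (effTC_eq_one_of_isEffPlanner_univ h).le)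
    (le_iInf fun _ => one_le_effTC _ _)

theorem isEffPlanner_of_isEmpty [IsEmpty X] (k : ℕ) (hk : 0 < k) (U : Set (X × X)) :
    IsEffPlanner G X k hk U :=
  ⟨isEmptyElim, continuous_of_const fun u => isEmptyElim u, fun u => isEmptyElim u,
    fun u => isEmptyElim u⟩

theorem isEffPlanner_three_univ_of_nullhomotopic {r : C(X, X)}
    (hr : ∀ x, r x ∈ MulAction.orbit G x) (hnull : r.Nullhomotopic) :
    IsEffPlanner G X 3 (by norm_num) univ := by
  obtain ⟨p, ⟨H⟩⟩ := hnull
  let γ : ∀ q : X × X, Path (r q.1) (r q.2) := fun q => (H.evalAt q.1).trans (H.evalAt q.2).symm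
  have hγ : Continuous fun q => (γ q : C(I, X)) := by
    refine ContinuousMap.continuous_of_continuous_uncurry _ ?_
    refine Path.trans_continuous_family (fun q : X × X => H.evalAt q.1) ?_ _
      (Path.symm_continuous_family (fun q : X × X => H.evalAt q.2) ?_) <;>
      exact H.continuous.comp (by fun_prop)
  refine ⟨fun u => ![const I u.1.1, γ u.1, const I u.1.2], ?_, ?_, fun u => ⟨rfl, rfl⟩⟩
  · refine continuous_pi fun i => ?_
    fin_cases i
    exacts [continuous_const'.comp (continuous_fst.comp continuous_subtype_val),
      hγ.comp continuous_subtype_val,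
      continuous_const'.comp (continuous_snd.comp continuous_subtype_val)]
  · rintro ⟨⟨a, b⟩, -⟩ (_ | _ | _) h
    · exact (γ (a, b)).source ▸ hr a
    · exact (γ (a, b)).target ▸ MulAction.mem_orbit_symm.mp (hr b)
    · omega

end EffectiveTC

theorem mem_orbit_involutionAction {X : Type*} {f : X → X} (hf : ∀ x, f (f x) = x) {x y : X}
    (h : y = x ∨ y = f x) :
    y ∈ @MulAction.orbit (Multiplicative (ZMod 2)) X (involutionAction f hf).toSMul x := by
  rcases h with rfl | rfl
  · exact ⟨1, if_neg (by decide)⟩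
  · exact ⟨Multiplicative.ofAdd 1, if_pos rfl⟩

namespace Susp

variable {X : Type*} [TopologicalSpace X]

/-- `[x, t] ↦ [x, max t (1 - t) ⊔ s]`: the fold at `s = 0`, the north pole at `s = 1`. -/
def raise (p : I × Susp X) : Susp X :=
  Quot.map (fun q : X × I => (q.1, q.2 ⊔ σ q.2 ⊔ p.1)) (by
    rintro q q' (rfl | ⟨h, h'⟩ | ⟨h, h'⟩)
    · exact Or.inl rfl
    all_goals exact Or.inr (Or.inr (by simp [h, h', le_one']))) p.2

theorem continuous_raise : Continuous (raise (X := X)) :=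
  isQuotientMap_quot_mk.continuous_lift_prod_right <| continuous_quot_mk.comp <| by fun_prop

def fold : C(Susp X, Susp X) := ⟨fun q => raise (0, q), continuous_raise.comp (by fun_prop)⟩

theorem fold_eq_or_eq_suspFlip (q : Susp X) : fold q = q ∨ fold q = suspFlip X q := by
  induction q using Quot.ind with
  | mk p =>
    obtain ⟨x, t⟩ := p
    rcases le_total (σ t) t with h | h
    · left
      show Quot.mk _ (x, t ⊔ σ t ⊔ 0) = _
      simp [h]
    · right
      show Quot.mk _ (x, t ⊔ σ t ⊔ 0) = Quot.mk _ (x, σ t)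
      simp [h]

theorem fold_nullhomotopic [Nonempty X] : (fold : C(Susp X, Susp X)).Nullhomotopic := by
  refine ⟨Quot.mk _ (Classical.arbitrary X, 1), ⟨⟨⟨raise, continuous_raise⟩, fun _ => rfl, ?_⟩⟩⟩
  intro q
  induction q using Quot.ind with
  | mk p => exact Quot.sound (Or.inr (Or.inr ⟨sup_eq_right.2 le_one', rfl⟩))

end Susp

/-- The unreduced suspension `ΣX`, with the `ℤ/2`-action interchanging the
two cones, satisfies `TC^{ℤ/2,∞}(ΣX) = 1`; in particular for some `k ≥ 1` there is a
`(ℤ/2,k)`-motion planner on all of `ΣX × ΣX`. -/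
theorem effTCinf_susp {X : Type*} [TopologicalSpace X] :
    @effTCinf (Multiplicative (ZMod 2)) (Susp X) _ _
      (involutionAction (suspFlip X) (suspFlip_invol X)) = 1 ∧
    ∃ (k : ℕ) (hk : 0 < k),
      @IsEffPlanner (Multiplicative (ZMod 2)) (Susp X) _ _
        (involutionAction (suspFlip X) (suspFlip_invol X)) k hk Set.univ := by
  let := involutionAction (suspFlip X) (suspFlip_invol X)
  have hplanner : IsEffPlanner (Multiplicative (ZMod 2)) (Susp X) 3 (by norm_num) univ := by
    rcases isEmpty_or_nonempty X with _ | _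
    · have : IsEmpty (Susp X) := Quot.instIsEmpty
      exact isEffPlanner_of_isEmpty _ _ _
    · exact isEffPlanner_three_univ_of_nullhomotopic
        (fun q => mem_orbit_involutionAction _ (Susp.fold_eq_or_eq_suspFlip q))
        Susp.fold_nullhomotopic
  exact ⟨effTCinf_eq_one_of_isEffPlanner_univ hplanner, 3, _, hplanner⟩
end

section
/- Let G and H be topological groups, let X be a path-connected metric space with a continuous G-action, and let Y be a path-connected metric space with a continuous H-action. Equip X × Y with the component-wise (G × H)-action. Then the effective topological complexities satisfy TC^{G×H,∞}(X × Y) ≤ TC^{G,∞}(X) + TC^{H,∞}(Y) − 1. -/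
open Set

/-- The component-wise action of `G × H` on `X × Y`. -/
def prodMulAction (G H X Y : Type*) [Group G] [Group H] [MulAction G X] [MulAction H Y] :
    MulAction (G × H) (X × Y) where
  smul p q := (p.1 • q.1, p.2 • q.2)
  one_smul q := by
    show ((1 : G) • q.1, (1 : H) • q.2) = q
    simp
  mul_smul a b q := by
    show ((a.1 * b.1) • q.1, (a.2 * b.2) • q.2) = (a.1 • b.1 • q.1, a.2 • b.2 • q.2)
    simp [mul_smul]

/-!
Pad all planners to a common number `k` of stages. For planner covers `U i` (`i < n`) of `X × X`
and `V j` (`j < m`) of `Y × Y`, the sets `U i × V j` carry product planners, and planners on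
pairwise disjoint open sets glue. To merge the `n * m` product sets into `n + m - 1` disjoint
unions, take partitions of unity `f i`, `g j` subordinate to the two covers and let `O (i, j)` be
the open set where `f i * g j` is positive and strictly exceeds every other `f i' * g j'` with
`i' + j' ≤ i + j`. Sets of equal level `i + j` are disjoint, and they cover: at each point the pair
of first maximisers of `f · z` and of `g · z` is such a strict maximum.
-/

open Function Topology

namespace IsEffPlanner

variable {G X : Type*} [Group G] [TopologicalSpace X] [MulAction G X] {k : ℕ} {hk : 0 < k}

theorem mono {U V : Set (X × X)} (hVU : V ⊆ U) (h : IsEffPlanner G X k hk U) :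
    IsEffPlanner G X k hk V := by
  obtain ⟨s, hs, hmem, hend⟩ := h
  exact ⟨s ∘ inclusion hVU, hs.comp (continuous_inclusion hVU), fun _ ↦ hmem _, fun _ ↦ hend _⟩

/-- Extra stages are filled with constant paths at the endpoint. -/
theorem of_le {k' : ℕ} (hk' : 0 < k') (hkk' : k ≤ k') {U : Set (X × X)}
    (h : IsEffPlanner G X k hk U) : IsEffPlanner G X k' hk' U := by
  obtain ⟨s, hs, hmem, hend⟩ := h
  let last : U → X := fun u ↦ s u ⟨k - 1, Nat.sub_lt hk Nat.one_pos⟩ 1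
  refine ⟨fun u i ↦ if hi : (i : ℕ) < k then s u ⟨i, hi⟩ else .const _ (last u), ?_, ?_, ?_⟩
  · refine continuous_pi fun i ↦ ?_
    split_ifs
    · exact (continuous_apply _).comp hs
    · exact ContinuousMap.continuous_const'.comp ((continuous_eval_const 1).comp
        ((continuous_apply _).comp hs))
  · intro u i hi
    by_cases hik : i + 1 < k
    · simpa [hik, Nat.lt_of_succ_lt hik] using hmem u i hik
    · by_cases hik' : i < k
      · obtain rfl : i = k - 1 := by omega
        simp [hik, hik', last, MulAction.mem_orbit_self]
      · simp [hik, hik', MulAction.mem_orbit_self]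
  · intro u
    refine ⟨by simpa [hk] using (hend u).1, ?_⟩
    by_cases hk'k : k' - 1 < k
    · obtain rfl : k' = k := by omega
      simpa [hk'k] using (hend u).2
    · simpa [hk'k] using (hend u).2

theorem iUnion {ι : Type*} {O : ι → Set (X × X)} (hO : ∀ i, IsOpen (O i))
    (hdisj : Pairwise (Disjoint on O)) (h : ∀ i, IsEffPlanner G X k hk (O i)) :
    IsEffPlanner G X k hk (⋃ i, O i) := by
  choose t ht hmem hend using h
  let S : ι → Set ↥(⋃ i, O i) := fun i ↦ Subtype.val ⁻¹' O i
  have hS : ∀ u, ∃ i, S i ∈ 𝓝 u := fun u ↦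
    (mem_iUnion.mp u.2).imp fun i hi ↦ ((hO i).preimage continuous_subtype_val).mem_nhds hi
  let s := ContinuousMap.liftCover S (fun i ↦ ⟨fun u ↦ t i ⟨u.1.1, u.2⟩, by fun_prop⟩)
    (fun i j u hi hj ↦ by
      obtain rfl : i = j := hdisj.eq (not_disjoint_iff.mpr ⟨u.1, hi, hj⟩)
      rfl) hS
  have hs : ∀ u : ↥(⋃ i, O i), ∃ i, ∃ hi : (u : X × X) ∈ O i, s u = t i ⟨u, hi⟩ := fun u ↦
    (mem_iUnion.mp u.2).imp fun i hi ↦ ⟨hi, ContinuousMap.liftCover_coe (⟨u, hi⟩ : S i)⟩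
  refine ⟨s, s.continuous, fun u ↦ ?_, fun u ↦ ?_⟩ <;> obtain ⟨i, hi, hsu⟩ := hs u <;> rw [hsu]
  exacts [hmem i _, hend i _]

end IsEffPlanner

theorem mem_orbit_prodMulAction {G H X Y : Type*} [Group G] [Group H] [MulAction G X]
    [MulAction H Y] {a b : X × Y} (h₁ : a.1 ∈ MulAction.orbit G b.1)
    (h₂ : a.2 ∈ MulAction.orbit H b.2) :
    a ∈ @MulAction.orbit (G × H) (X × Y) (prodMulAction G H X Y).toSMul b := by
  obtain ⟨g, hg⟩ := h₁
  obtain ⟨h, hh⟩ := h₂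
  exact ⟨(g, h), Prod.ext hg hh⟩

theorem IsEffPlanner.prod {G H X Y : Type*} [Group G] [Group H] [TopologicalSpace X]
    [TopologicalSpace Y] [MulAction G X] [MulAction H Y] {k : ℕ} {hk : 0 < k}
    {U : Set (X × X)} {V : Set (Y × Y)}
    (hU : IsEffPlanner G X k hk U) (hV : IsEffPlanner H Y k hk V) :
    @IsEffPlanner (G × H) (X × Y) _ _ (prodMulAction G H X Y) k hk
      (Homeomorph.prodProdProdComm X Y X Y ⁻¹' U ×ˢ V) := by
  obtain ⟨sU, hsU, hmemU, hendU⟩ := hU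
  obtain ⟨sV, hsV, hmemV, hendV⟩ := hV
  let σ := Homeomorph.prodProdProdComm X Y X Y
  let pU : σ ⁻¹' U ×ˢ V → U := fun w ↦ ⟨(σ w).1, w.2.1⟩
  let pV : σ ⁻¹' U ×ˢ V → V := fun w ↦ ⟨(σ w).2, w.2.2⟩
  have hpU : Continuous pU := by fun_prop
  have hpV : Continuous pV := by fun_prop
  refine ⟨fun w i ↦ (sU (pU w) i).prodMk (sV (pV w) i), continuous_pi fun i ↦ ?_,
    fun w i hi ↦ mem_orbit_prodMulAction (hmemU _ i hi) (hmemV _ i hi),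
    fun w ↦ ⟨Prod.ext (hendU _).1 (hendV _).1, Prod.ext (hendU _).2 (hendV _).2⟩⟩
  exact ContinuousMap.continuous_of_continuous_uncurry _
    (by simp only [ContinuousMap.prod_eval]; fun_prop)

section DominantSet

variable {Z ι : Type*}

def dominantSet (h : ι → Z → ℝ) (lv : ι → ℕ) (p : ι) : Set Z :=
  {z | 0 < h p z ∧ ∀ q, q ≠ p → lv q ≤ lv p → h q z < h p z}

variable {h : ι → Z → ℝ} {lv : ι → ℕ}

theorem isOpen_dominantSet [TopologicalSpace Z] [Finite ι] (hh : ∀ p, Continuous (h p))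
    (p : ι) : IsOpen (dominantSet h lv p) := by
  simp only [dominantSet, ofPred_and, ofPred_forall]
  exact (isOpen_lt continuous_const (hh p)).inter <| isOpen_iInter_of_finite fun q ↦
    isOpen_iInter_of_finite fun _ ↦ isOpen_iInter_of_finite fun _ ↦ isOpen_lt (hh q) (hh p)

theorem disjoint_dominantSet {p q : ι} (hpq : p ≠ q) (hlv : lv p = lv q) :
    Disjoint (dominantSet h lv p) (dominantSet h lv q) :=
  disjoint_left.mpr fun _ hp hq ↦
    (hp.2 q hpq.symm hlv.ge).asymm (hq.2 p hpq hlv.le)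

end DominantSet

theorem exists_first_argmax {ι α : Type*} [LinearOrder ι] [Finite ι] [Nonempty ι] [LinearOrder α]
    (f : ι → α) : ∃ i, (∀ j, f j ≤ f i) ∧ ∀ j, f j = f i → i ≤ j := by
  obtain ⟨i₀, hi₀⟩ := Finite.exists_max f
  obtain ⟨i, hi, hmin⟩ := exists_min_image {j | f j = f i₀} id (toFinite _) ⟨i₀, rfl⟩
  exact ⟨i, fun j ↦ hi ▸ hi₀ j, fun j hj ↦ hmin j (hj.trans hi)⟩

theorem exists_mem_dominantSet_mul {Z : Type*} {n m : ℕ} {f : Fin n → Z → ℝ}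
    {g : Fin m → Z → ℝ} (hf₀ : ∀ i z, 0 ≤ f i z) (hg₀ : ∀ j z, 0 ≤ g j z) {z : Z}
    (hf : ∃ i, 0 < f i z) (hg : ∃ j, 0 < g j z) :
    ∃ p : Fin n × Fin m,
      z ∈ dominantSet (fun p z ↦ f p.1 z * g p.2 z) (fun p ↦ (p.1 : ℕ) + p.2) p := by
  obtain ⟨i₀, hi₀⟩ := hf
  obtain ⟨j₀, hj₀⟩ := hg
  have : Nonempty (Fin n) := ⟨i₀⟩
  have : Nonempty (Fin m) := ⟨j₀⟩
  obtain ⟨i, hfi, hi⟩ := exists_first_argmax (f · z)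
  obtain ⟨j, hgj, hj⟩ := exists_first_argmax (g · z)
  have hfpos : 0 < f i z := hi₀.trans_le (hfi i₀)
  have hgpos : 0 < g j z := hj₀.trans_le (hgj j₀)
  refine ⟨(i, j), mul_pos hfpos hgpos, fun q hq hlv ↦ ?_⟩
  have hlt : q.1 < i ∨ q.2 < j := by
    by_contra! hge
    refine hq (Prod.ext (Fin.ext ?_) (Fin.ext ?_)) <;> simp only at hlv ⊢ <;> omega
  rcases hlt with hlt | hlt
  · have hf_lt : f q.1 z < f i z := (hfi q.1).lt_of_ne fun e ↦ (hi q.1 e).not_gt hlt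
    calc f q.1 z * g q.2 z ≤ f q.1 z * g j z := mul_le_mul_of_nonneg_left (hgj q.2) (hf₀ _ _)
      _ < f i z * g j z := mul_lt_mul_of_pos_right hf_lt hgpos
  · have hg_lt : g q.2 z < g j z := (hgj q.2).lt_of_ne fun e ↦ (hj q.2 e).not_gt hlt
    calc f q.1 z * g q.2 z ≤ f i z * g q.2 z := mul_le_mul_of_nonneg_right (hfi q.1) (hg₀ _ _)
      _ < f i z * g j z := mul_lt_mul_of_pos_left hg_lt hfpos

theorem exists_disjoint_open_refinement {Z : Type*} [TopologicalSpace Z] [NormalSpace Z]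
    {n m : ℕ} {A : Fin n → Set Z} {B : Fin m → Set Z} (hA : ∀ i, IsOpen (A i))
    (hAcov : ⋃ i, A i = univ) (hB : ∀ j, IsOpen (B j)) (hBcov : ⋃ j, B j = univ) :
    ∃ O : Fin n × Fin m → Set Z, (∀ p, IsOpen (O p)) ∧ (∀ p, O p ⊆ A p.1 ∩ B p.2) ∧
      (∀ p q, p ≠ q → (p.1 : ℕ) + p.2 = q.1 + q.2 → Disjoint (O p) (O q)) ∧
      ⋃ p, O p = univ := by
  obtain ⟨f, hfA⟩ := PartitionOfUnity.exists_isSubordinate_of_locallyFinite isClosed_univ A hA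
    (locallyFinite_of_finite _) hAcov.ge
  obtain ⟨g, hgB⟩ := PartitionOfUnity.exists_isSubordinate_of_locallyFinite isClosed_univ B hB
    (locallyFinite_of_finite _) hBcov.ge
  refine ⟨dominantSet (fun p z ↦ f p.1 z * g p.2 z) (fun p ↦ (p.1 : ℕ) + p.2),
    isOpen_dominantSet (fun p ↦ by fun_prop), fun p z hz ↦ ?_,
    fun p q hpq hlv ↦ disjoint_dominantSet hpq hlv,
    iUnion_eq_univ_iff.mpr fun z ↦ exists_mem_dominantSet_mul f.nonneg g.nonneg
      (f.exists_pos (mem_univ z)) (g.exists_pos (mem_univ z))⟩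
  exact ⟨hfA p.1 (subset_tsupport _ (left_ne_zero_of_mul hz.1.ne')),
    hgB p.2 (subset_tsupport _ (right_ne_zero_of_mul hz.1.ne'))⟩

section EffTC

variable {G X : Type*} [Group G] [TopologicalSpace X] [MulAction G X]

theorem effTC_le_of_cover {k n : ℕ} {hk : 0 < k} (hn : 1 ≤ n) {U : Fin n → Set (X × X)}
    (hU : ∀ i, IsOpen (U i)) (hcov : ⋃ i, U i = univ) (hpl : ∀ i, IsEffPlanner G X k hk (U i)) :
    effTC G X k hk ≤ n :=
  sInf_le ⟨n, rfl, hn, U, hU, hcov, hpl⟩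

theorem exists_cover_of_effTC_ne_top {k : ℕ} {hk : 0 < k} (h : effTC G X k hk ≠ ⊤) :
    ∃ n : ℕ, effTC G X k hk = n ∧ 1 ≤ n ∧
      ∃ U : Fin n → Set (X × X), (∀ i, IsOpen (U i)) ∧ (⋃ i, U i) = univ ∧
        ∀ i, IsEffPlanner G X k hk (U i) := by
  refine (csInf_mem (nonempty_iff_ne_empty.mpr fun he ↦ h ?_) : effTC G X k hk ∈ {ℓ | _})
  rw [effTC, he, sInf_empty]

theorem effTC_le_effTC_of_le {k k' : ℕ} {hk : 0 < k} {hk' : 0 < k'} (hkk' : k ≤ k') :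
    effTC G X k' hk' ≤ effTC G X k hk :=
  sInf_le_sInf fun _ ⟨n, hℓ, hn, U, hU, hcov, hpl⟩ ↦
    ⟨n, hℓ, hn, U, hU, hcov, fun i ↦ (hpl i).of_le hk' hkk'⟩

theorem effTCinf_le_effTC (k : ℕ) : effTCinf G X ≤ effTC G X (k + 1) k.succ_pos :=
  iInf_le _ k

theorem exists_effTC_eq_effTCinf : ∃ k, effTC G X (k + 1) k.succ_pos = effTCinf G X :=
  ciInf_mem _

end EffTC

section Product

variable {G H X Y : Type*} [Group G] [Group H] [TopologicalSpace X] [TopologicalSpace Y]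
  [MulAction G X] [MulAction H Y] [NormalSpace ((X × Y) × (X × Y))] {k : ℕ} {hk : 0 < k}

theorem effTC_prod_le_of_covers {n m : ℕ} (hn : 1 ≤ n) (hm : 1 ≤ m)
    {U : Fin n → Set (X × X)} (hU : ∀ i, IsOpen (U i)) (hUcov : ⋃ i, U i = univ)
    (hUpl : ∀ i, IsEffPlanner G X k hk (U i))
    {V : Fin m → Set (Y × Y)} (hV : ∀ j, IsOpen (V j)) (hVcov : ⋃ j, V j = univ)
    (hVpl : ∀ j, IsEffPlanner H Y k hk (V j)) :
    @effTC (G × H) (X × Y) _ _ (prodMulAction G H X Y) k hk ≤ (n + m - 1 : ℕ) := by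
  let := prodMulAction G H X Y
  let σ := Homeomorph.prodProdProdComm X Y X Y
  obtain ⟨O, hO, hOsub, hOdisj, hOcov⟩ := exists_disjoint_open_refinement
    (A := fun i ↦ (Prod.fst ∘ σ) ⁻¹' U i) (B := fun j ↦ (Prod.snd ∘ σ) ⁻¹' V j)
    (fun i ↦ (hU i).preimage (by fun_prop))
    (by simp only [← preimage_iUnion, hUcov, preimage_univ])
    (fun j ↦ (hV j).preimage (by fun_prop))
    (by simp only [← preimage_iUnion, hVcov, preimage_univ])
  refine effTC_le_of_cover (by omega)
    (U := fun r ↦ ⋃ p : {p : Fin n × Fin m // (p.1 : ℕ) + p.2 = r}, O p)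
    (fun r ↦ isOpen_iUnion fun p ↦ hO p) ?_ fun r ↦ ?_
  · refine iUnion_eq_univ_iff.mpr fun z ↦ ?_
    obtain ⟨p, hp⟩ := mem_iUnion.mp (hOcov.ge (mem_univ z))
    exact ⟨⟨p.1 + p.2, by omega⟩, mem_iUnion.mpr ⟨⟨p, rfl⟩, hp⟩⟩
  · exact IsEffPlanner.iUnion (fun p ↦ hO p)
      (fun p q hpq ↦ hOdisj p q (Subtype.coe_injective.ne hpq) (p.2.trans q.2.symm))
      fun p ↦ ((hUpl p.1.1).prod (hVpl p.1.2)).mono (hOsub p)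

theorem effTC_prod_le :
    @effTC (G × H) (X × Y) _ _ (prodMulAction G H X Y) k hk ≤
      effTC G X k hk + effTC H Y k hk - 1 := by
  rcases eq_or_ne (effTC G X k hk) ⊤ with hX | hX
  · simp [hX]
  rcases eq_or_ne (effTC H Y k hk) ⊤ with hY | hY
  · simp [hY]
  obtain ⟨n, hn, hn₁, U, hU, hUcov, hUpl⟩ := exists_cover_of_effTC_ne_top hX
  obtain ⟨m, hm, hm₁, V, hV, hVcov, hVpl⟩ := exists_cover_of_effTC_ne_top hY
  calc _ ≤ ((n + m - 1 : ℕ) : ℕ∞) :=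
        effTC_prod_le_of_covers hn₁ hm₁ hU hUcov hUpl hV hVcov hVpl
    _ = effTC G X k hk + effTC H Y k hk - 1 := by
      rw [hn, hm, ENat.natCast_sub, Nat.cast_add, Nat.cast_one]

end Product

theorem effTCinf_prod_le_general {G H : Type*} [Group G] [Group H]
    {X Y : Type*} [MetricSpace X] [MetricSpace Y]
    [MulAction G X] [MulAction H Y] :
    @effTCinf (G × H) (X × Y) _ _ (prodMulAction G H X Y) ≤
      effTCinf G X + effTCinf H Y - 1 := by
  let := prodMulAction G H X Y
  obtain ⟨k₁, hk₁⟩ := exists_effTC_eq_effTCinf (G := G) (X := X)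
  obtain ⟨k₂, hk₂⟩ := exists_effTC_eq_effTCinf (G := H) (X := Y)
  let K := max k₁ k₂
  calc _ ≤ @effTC (G × H) (X × Y) _ _ (prodMulAction G H X Y) (K + 1) K.succ_pos :=
        effTCinf_le_effTC K
    _ ≤ effTC G X (K + 1) K.succ_pos + effTC H Y (K + 1) K.succ_pos - 1 := effTC_prod_le
    _ ≤ effTC G X (k₁ + 1) k₁.succ_pos + effTC H Y (k₂ + 1) k₂.succ_pos - 1 := by
      gcongr <;> exact effTC_le_effTC_of_le (by omega)
    _ = effTCinf G X + effTCinf H Y - 1 := by rw [hk₁, hk₂]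

/-- For path-connected metric `G`- and `H`-spaces `X` and `Y`, the
component-wise `(G × H)`-action on `X × Y` satisfies the product inequality
`TC^{G×H,∞}(X × Y) ≤ TC^{G,∞}(X) + TC^{H,∞}(Y) − 1`. -/
theorem effTCinf_prod_le {G H : Type*} [Group G] [Group H]
    [TopologicalSpace G] [TopologicalSpace H] [IsTopologicalGroup G] [IsTopologicalGroup H]
    {X Y : Type*} [MetricSpace X] [MetricSpace Y]
    [PathConnectedSpace X] [PathConnectedSpace Y]
    [MulAction G X] [MulAction H Y] [ContinuousSMul G X] [ContinuousSMul H Y] :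
    @effTCinf (G × H) (X × Y) _ _ (prodMulAction G H X Y) ≤
      effTCinf G X + effTCinf H Y - 1 :=
  effTCinf_prod_le_general
end
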